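/- For any disjunctive sequent calculus (L(P),⊢), the poset (|(L(P),⊢)|,⊆) of all logical states ordered by set inclusion is an algebraic L-domain. -/

import Mathlib

/- ## Syntax of disjunctive propositional logic -/

/-- Raw formulae over a set `P` of atomic formulae: atoms, the constants
`T` and `F`, binary conjunction, and disjunction of an arbitrary family
of formulae. -/
inductive Fm (P : Type) : Type 1 where
  | atom : P → Fm P
  | tt : Fm P
  | ff : Fm P
  | conj : Fm P → Fm P → Fm P
  | disj : {ι : Type} → (ι → Fm P) → Fm P

namespace Fm

/-- The valid sequents of the disjunctive sequent calculus generated from the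
disjunctive basis `(P, A)`, where `A` is the set of atomic disjointness
assumptions `p₁,…,pₙ ⊢ F` (each given by a finite nonempty set of atoms). -/
inductive Seq {P : Type} (A : Set (Set P)) : Set (Fm P) → Fm P → Prop where
  | ax {s : Set P} : s ∈ A → s.Finite → s.Nonempty → Seq A (Fm.atom '' s) Fm.ff
  | id (φ : Fm P) : Seq A {φ} φ
  | lwk {Γ : Set (Fm P)} {ψ : Fm P} (φ : Fm P) : Seq A Γ ψ → Seq A (insert φ Γ) ψ
  | cut {Γ Δ : Set (Fm P)} {φ ψ : Fm P} :
      Seq A Γ φ → Seq A (insert φ Δ) ψ → Seq A (Γ ∪ Δ) ψ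
  | lf (φ : Fm P) : Seq A {Fm.ff} φ
  | rt : Seq A ∅ Fm.tt
  | landl {Γ : Set (Fm P)} {φ ψ θ : Fm P} :
      Seq A (insert φ (insert ψ Γ)) θ → Seq A (insert (Fm.conj φ ψ) Γ) θ
  | randr {Γ Δ : Set (Fm P)} {φ ψ : Fm P} :
      Seq A Γ φ → Seq A Δ ψ → Seq A (Γ ∪ Δ) (Fm.conj φ ψ)
  | ldisj {Γ : Set (Fm P)} {θ : Fm P} {ι : Type} {f : ι → Fm P} :
      (∀ i, Seq A (insert (f i) Γ) θ) → (∀ i j, i ≠ j → Seq A {f i, f j} Fm.ff) →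
      Seq A (insert (Fm.disj f) Γ) θ
  | rdisj {Γ : Set (Fm P)} {ι : Type} {f : ι → Fm P} (i₀ : ι) :
      Seq A Γ (f i₀) → (∀ i j, i ≠ j → Seq A {f i, f j} Fm.ff) →
      Seq A Γ (Fm.disj f)

/-- The wellformed formulae `L(P)` generated from the disjunctive basis
`(P, A)`: disjunctions are only formed over provably pairwise disjoint
families. -/
inductive WF {P : Type} (A : Set (Set P)) : Fm P → Prop where
  | atom (p : P) : WF A (Fm.atom p)
  | tt : WF A Fm.tt
  | ff : WF A Fm.ff
  | conj {φ ψ : Fm P} : WF A φ → WF A ψ → WF A (Fm.conj φ ψ)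
  | disj {ι : Type} {f : ι → Fm P} : (∀ i, WF A (f i)) →
      (∀ i j, i ≠ j → Seq A {f i, f j} Fm.ff) → WF A (Fm.disj f)

end Fm

/- ## Generic notions relative to a wellformedness predicate `W` (the set
`L(P)` of formulae) and an entailment relation `E` (the valid sequents). -/

section Defs

variable {P Q R : Type}

/-- `φ` is a tautology: `T ⊢ φ` is valid. -/
def Taut (W : Fm P → Prop) (E : Set (Fm P) → Fm P → Prop) (φ : Fm P) : Prop :=
  W φ ∧ E {Fm.tt} φ

/-- `φ` is a contradiction: `φ ⊢ F` is valid. -/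
def Contra (W : Fm P → Prop) (E : Set (Fm P) → Fm P → Prop) (φ : Fm P) : Prop :=
  W φ ∧ E {φ} Fm.ff

/-- `φ` is satisfiable: neither a tautology nor a contradiction. -/
def Satisfiable (W : Fm P → Prop) (E : Set (Fm P) → Fm P → Prop) (φ : Fm P) : Prop :=
  W φ ∧ ¬ Taut W E φ ∧ ¬ Contra W E φ

/-- Built up from atomic formulae only by conjunctive connectives. -/
inductive ConjShape {P : Type} : Fm P → Prop where
  | atom (p : P) : ConjShape (Fm.atom p)
  | conj {φ ψ : Fm P} : ConjShape φ → ConjShape ψ → ConjShape (Fm.conj φ ψ)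

/-- A conjunction: a satisfiable formula built up from atomic formulae only
by conjunctive connectives. -/
def IsConjForm (W : Fm P → Prop) (E : Set (Fm P) → Fm P → Prop) (φ : Fm P) : Prop :=
  ConjShape φ ∧ Satisfiable W E φ

/-- `X[⊢] = {φ ∈ L(P) : Γ ⊢ φ is valid for some finite Γ ⊆ X}`. -/
def entClose (W : Fm P → Prop) (E : Set (Fm P) → Fm P → Prop) (X : Set (Fm P)) :
    Set (Fm P) :=
  {φ | W φ ∧ ∃ Γ : Set (Fm P), Γ ⊆ X ∧ Γ.Finite ∧ E Γ φ}

/-- A logical state: a nonempty proper subset `S` of `L(P)` such that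
(S1) any flat formula `⋁̇ᵢ μᵢ` in `S` has some disjunct `μᵢ₀ ∈ S`, and
(S2) `S[⊢] ⊆ S`. -/
structure IsLogicalState (W : Fm P → Prop) (E : Set (Fm P) → Fm P → Prop)
    (S : Set (Fm P)) : Prop where
  nonempty : S.Nonempty
  subset : S ⊆ {φ | W φ}
  proper : S ≠ {φ | W φ}
  s1 : ∀ (ι : Type) (f : ι → Fm P), (∀ i, IsConjForm W E (f i)) →
      (∀ i j, i ≠ j → E {f i, f j} Fm.ff) → Satisfiable W E (Fm.disj f) →
      Fm.disj f ∈ S → ∃ i, f i ∈ S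
  s2 : entClose W E S ⊆ S

/-- `[X]_S`: the intersection of all logical states `T` with `X ⊆ T ⊆ S`. -/
def clIn (W : Fm P → Prop) (E : Set (Fm P) → Fm P → Prop) (X S : Set (Fm P)) :
    Set (Fm P) :=
  ⋂₀ {T | IsLogicalState W E T ∧ X ⊆ T ∧ T ⊆ S}

/-- An irreducible conjunction. -/
def IsIrredConj (W : Fm P → Prop) (E : Set (Fm P) → Fm P → Prop) (μ : Fm P) : Prop :=
  IsConjForm W E μ ∧ ∀ (ι : Type) (f : ι → Fm P), (∀ i, W (f i)) →
    (∀ i j, i ≠ j → E {f i, f j} Fm.ff) → E {μ} (Fm.disj f) → ∃ i, E {μ} (f i)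

/-- An expressive disjunctive sequent calculus: every satisfiable formula is
logically equivalent to an irreducible flat formula (from below disjunctwise). -/
def Expressive (W : Fm P → Prop) (E : Set (Fm P) → Fm P → Prop) : Prop :=
  ∀ ψ : Fm P, Satisfiable W E ψ → ∃ (ι : Type) (f : ι → Fm P),
    (∀ i, IsIrredConj W E (f i)) ∧ (∀ i j, i ≠ j → E {f i, f j} Fm.ff) ∧
    Satisfiable W E (Fm.disj f) ∧ E {ψ} (Fm.disj f) ∧ ∀ i, E {f i} ψ

/-- `Θ[X] = {φ ∈ L(Q) : (μ,φ) ∈ Θ for some μ ∈ X ∩ IC(P)}`. -/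
def ThetaImage (WP : Fm P → Prop) (EP : Set (Fm P) → Fm P → Prop)
    (Θ : Fm P → Fm Q → Prop) (X : Set (Fm P)) : Set (Fm Q) :=
  {φ | ∃ μ ∈ X, IsIrredConj WP EP μ ∧ Θ μ φ}

/-- A consequence relation `Θ ⊆ IC(P) × L(Q)` satisfying (R1), (R2), (R3). -/
def IsConsRel (WP : Fm P → Prop) (EP : Set (Fm P) → Fm P → Prop)
    (WQ : Fm Q → Prop) (EQ : Set (Fm Q) → Fm Q → Prop)
    (Θ : Fm P → Fm Q → Prop) : Prop :=
  (∀ μ ψ, Θ μ ψ → IsIrredConj WP EP μ ∧ WQ ψ) ∧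
  (∀ μ ν ψ, IsIrredConj WP EP μ → EP {μ} ν → Θ ν ψ → Θ μ ψ) ∧
  (∀ μ φ ψ, WQ ψ → Θ μ φ → EQ {φ} ψ → Θ μ ψ) ∧
  (∀ μ ψ, Θ μ ψ → ∃ ν, IsIrredConj WQ EQ ν ∧ Θ μ ν ∧ EQ {ν} ψ)

/-- Composition of consequence relations. -/
def consRelComp (WQ : Fm Q → Prop) (EQ : Set (Fm Q) → Fm Q → Prop)
    (Θ : Fm P → Fm Q → Prop) (Θ' : Fm Q → Fm R → Prop) : Fm P → Fm R → Prop :=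
  fun μ φ => ∃ ν, IsIrredConj WQ EQ ν ∧ Θ μ ν ∧ Θ' ν φ

/-- The identity consequence relation `(μ,φ) ∈ id_P ↔ φ ∈ {μ}[⊢_P]`. -/
def consRelId (W : Fm P → Prop) (E : Set (Fm P) → Fm P → Prop) : Fm P → Fm P → Prop :=
  fun μ φ => IsIrredConj W E μ ∧ φ ∈ entClose W E {μ}

end Defs

/-- The poset of logical states of the calculus generated by the basis `(P,A)`,
ordered by set inclusion. -/
abbrev LSt (P : Type) (A : Set (Set P)) : Type 1 :=
  {S : Set (Fm P) // IsLogicalState (Fm.WF A) (Fm.Seq A) S}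

/- ## Domain-theoretic notions -/

/-- A compact element of a poset (w.r.t. suprema of directed subsets). -/
def IsCompactElt {α : Type*} [PartialOrder α] (x : α) : Prop :=
  ∀ d : Set α, d.Nonempty → DirectedOn (· ≤ ·) d → ∀ s, IsLUB d s → x ≤ s →
    ∃ y ∈ d, x ≤ y

/-- An algebraic domain: a pointed dcpo in which every element is the
supremum of the directed set of compact elements below it. -/
def IsAlgebraicDomain (α : Type*) [PartialOrder α] : Prop :=
  (∃ b : α, ∀ x, b ≤ x) ∧
  (∀ d : Set α, d.Nonempty → DirectedOn (· ≤ ·) d → ∃ s, IsLUB d s) ∧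
  (∀ x : α, ({k : α | IsCompactElt k ∧ k ≤ x}).Nonempty ∧
    DirectedOn (· ≤ ·) {k : α | IsCompactElt k ∧ k ≤ x} ∧
    IsLUB {k : α | IsCompactElt k ∧ k ≤ x} x)

/-- An algebraic L-domain: an algebraic domain in which every principal ideal
`↓x` is a complete lattice (every subset of `↓x` has a supremum in `↓x`). -/
def IsAlgebraicLDomain (α : Type*) [PartialOrder α] : Prop :=
  IsAlgebraicDomain α ∧
  ∀ x : α, ∀ T : Set α, T ⊆ Set.Iic x → ∃ s ∈ Set.Iic x,
    (∀ t ∈ T, t ≤ s) ∧ ∀ u ∈ Set.Iic x, (∀ t ∈ T, t ≤ u) → s ≤ u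

/- ## The calculus associated with an algebraic L-domain -/

/-- The atomic formulae of the associated calculus: (upsets of) elements of
`K*(D)`, the compact non-bottom elements. -/
abbrev LAtom (D : Type) [PartialOrder D] : Type := {x : D // IsCompactElt x ∧ ¬ IsBot x}

/-- The interpretation `φ̂ ⊆ D` of a formula: `F, T, ∧, ⋁̇` become
`∅, D`, intersection and union. -/
def hat {D : Type} [PartialOrder D] : Fm (LAtom D) → Set D
  | Fm.atom x => Set.Ici x.val
  | Fm.tt => Set.univ
  | Fm.ff => ∅
  | Fm.conj φ ψ => hat φ ∩ hat ψ
  | Fm.disj f => ⋃ i, hat (f i)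

/-- The formulae `L(P_D)` of the associated calculus: disjunctions only of
families with pairwise disjoint interpretations. -/
inductive DWF {D : Type} [PartialOrder D] : Fm (LAtom D) → Prop where
  | atom (p : LAtom D) : DWF (Fm.atom p)
  | tt : DWF Fm.tt
  | ff : DWF Fm.ff
  | conj {φ ψ : Fm (LAtom D)} : DWF φ → DWF ψ → DWF (Fm.conj φ ψ)
  | disj {ι : Type} {f : ι → Fm (LAtom D)} : (∀ i, DWF (f i)) →
      (∀ i j, i ≠ j → hat (f i) ∩ hat (f j) = ∅) → DWF (Fm.disj f)

/-- Validity in the associated calculus: `ψ₁,…,ψₙ ⊢_D φ` iff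
`ψ̂₁ ∩ … ∩ ψ̂ₙ ⊆ φ̂`. -/
def DSeq {D : Type} [PartialOrder D] (Γ : Set (Fm (LAtom D))) (φ : Fm (LAtom D)) : Prop :=
  ⋂₀ (hat '' Γ) ⊆ hat φ

/-- A decomposable subset of `D`: the upper set `↑A` of a pairwise
inconsistent set `A` of compact elements. -/
def IsDecomposable {D : Type} [PartialOrder D] (U : Set D) : Prop :=
  ∃ A : Set D, (∀ a ∈ A, IsCompactElt a) ∧
    (∀ a ∈ A, ∀ b ∈ A, a ≠ b → Set.Ici a ∩ Set.Ici b = ∅) ∧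
    U = ⋃ a ∈ A, Set.Ici a

/-- The conjunction `↑x₁ ∧ ↑x₂ ∧ … ∧ ↑xₙ` of a nonempty list of atoms. -/
def bigConj {P : Type} (x : P) (l : List P) : Fm P :=
  l.foldl (fun φ y => Fm.conj φ (Fm.atom y)) (Fm.atom x)

/-!
The logical states of a disjunctive sequent calculus are closed under intersections of
nonempty families having a common upper bound: (S2) passes to intersections, and for (S1)
the disjuncts chosen in the various members all lie in the common bound, so pairwise
disjointness forces them to coincide. Directed unions are states because sequents have
finite antecedents. The tautologies form the least state, since the all-false valuation
refutes `T ⊢ F`. Consequently each `↓x` is a complete lattice, with the state generated by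
`X ⊆ x` inside `x` as the supremum of `X`, and the states generated by finite subsets of
`x` are compact and form a directed family with supremum `x`.
-/

theorem isAlgebraicDomain_of_compact_basis {α : Type*} [PartialOrder α]
    (hbot : ∃ b : α, ∀ x, b ≤ x)
    (hdcpo : ∀ d : Set α, d.Nonempty → DirectedOn (· ≤ ·) d → ∃ s, IsLUB d s)
    (hbasis : ∀ x : α, ∃ B : Set α, B.Nonempty ∧ DirectedOn (· ≤ ·) B ∧
      (∀ b ∈ B, IsCompactElt b) ∧ IsLUB B x) :
    IsAlgebraicDomain α := by
  refine ⟨hbot, hdcpo, fun x => ?_⟩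
  obtain ⟨B, ⟨b, hb⟩, hdir, hcpt, hlub⟩ := hbasis x
  have below_basis : ∀ k, IsCompactElt k → k ≤ x → ∃ b ∈ B, k ≤ b :=
    fun k hk hkx => hk B ⟨b, hb⟩ hdir x hlub hkx
  have basis_mem : ∀ b ∈ B, b ∈ {k | IsCompactElt k ∧ k ≤ x} :=
    fun b hb => ⟨hcpt b hb, hlub.1 hb⟩
  refine ⟨⟨b, basis_mem b hb⟩, ?_, fun k hk => hk.2,
    fun u hu => hlub.2 fun b hb => hu (basis_mem b hb)⟩
  rintro k₁ ⟨hk₁, hk₁x⟩ k₂ ⟨hk₂, hk₂x⟩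
  obtain ⟨b₁, hb₁, hkb₁⟩ := below_basis k₁ hk₁ hk₁x
  obtain ⟨b₂, hb₂, hkb₂⟩ := below_basis k₂ hk₂ hk₂x
  obtain ⟨b₃, hb₃, hb₁₃, hb₂₃⟩ := hdir b₁ hb₁ b₂ hb₂
  exact ⟨b₃, basis_mem b₃ hb₃, hkb₁.trans hb₁₃, hkb₂.trans hb₂₃⟩

namespace Fm

variable {P : Type} {A : Set (Set P)}

def falseVal : Fm P → Prop
  | atom _ => False
  | tt => True
  | ff => False
  | conj φ ψ => falseVal φ ∧ falseVal ψ
  | disj f => ∃ i, falseVal (f i)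

theorem Seq.falseVal_of_forall {Γ : Set (Fm P)} {φ : Fm P} (h : Seq A Γ φ)
    (hΓ : ∀ γ ∈ Γ, falseVal γ) : falseVal φ := by
  induction h with
  | ax _ _ hne =>
    obtain ⟨p, hp⟩ := hne
    exact (hΓ (atom p) ⟨p, hp, rfl⟩).elim
  | id φ => exact hΓ φ rfl
  | lwk φ _ ih => exact ih fun γ hγ => hΓ γ (Set.mem_insert_of_mem _ hγ)
  | cut _ _ ih₁ ih₂ =>
    refine ih₂ fun γ hγ => ?_
    rcases hγ with rfl | hγ
    · exact ih₁ fun δ hδ => hΓ δ (Or.inl hδ)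
    · exact hΓ γ (Or.inr hγ)
  | lf φ => exact (hΓ _ rfl).elim
  | rt => trivial
  | landl _ ih =>
    obtain ⟨h₁, h₂⟩ : falseVal (conj _ _) := hΓ _ (Set.mem_insert _ _)
    refine ih fun γ hγ => ?_
    rcases hγ with rfl | rfl | hγ
    · exact h₁
    · exact h₂
    · exact hΓ γ (Set.mem_insert_of_mem _ hγ)
  | randr _ _ ih₁ ih₂ =>
    exact ⟨ih₁ fun γ hγ => hΓ γ (Or.inl hγ), ih₂ fun γ hγ => hΓ γ (Or.inr hγ)⟩
  | ldisj _ _ ih =>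
    obtain ⟨i, hi⟩ : falseVal (disj _) := hΓ _ (Set.mem_insert _ _)
    refine ih i fun γ hγ => ?_
    rcases hγ with rfl | hγ
    · exact hi
    · exact hΓ γ (Set.mem_insert_of_mem _ hγ)
  | rdisj i₀ _ _ ih => exact ⟨i₀, ih hΓ⟩

theorem Seq.not_tt_ff : ¬ Seq A {tt} ff := fun h =>
  h.falseVal_of_forall fun γ hγ => by rw [hγ]; trivial

theorem Seq.insert_tt_of_union {Γ : Set (Fm P)} (hΓ : Γ.Finite)
    (htaut : ∀ γ ∈ Γ, Seq A {tt} γ) {Δ : Set (Fm P)} {φ : Fm P} (h : Seq A (Γ ∪ Δ) φ) :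
    Seq A (insert tt Δ) φ := by
  induction Γ, hΓ using Set.Finite.induction_on generalizing Δ with
  | empty => exact .lwk _ (by rwa [Set.empty_union] at h)
  | @insert γ Γ _ _ ih =>
    rw [Set.insert_union] at h
    have hcut := Seq.cut (htaut γ (Set.mem_insert _ _)) h
    rw [Set.singleton_union, ← Set.union_insert] at hcut
    simpa only [Set.insert_idem] using
      ih (fun δ hδ => htaut δ (Set.mem_insert_of_mem _ hδ)) hcut

end Fm

section LogicalState

variable {P : Type} {A : Set (Set P)} {S : Set (Fm P)}

namespace IsLogicalState

theorem tt_mem (hS : IsLogicalState (Fm.WF A) (Fm.Seq A) S) : Fm.tt ∈ S :=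
  hS.s2 ⟨.tt, ∅, Set.empty_subset _, Set.finite_empty, .rt⟩

theorem ff_not_mem (hS : IsLogicalState (Fm.WF A) (Fm.Seq A) S) : Fm.ff ∉ S := fun hff =>
  hS.proper <| hS.subset.antisymm fun φ hφ =>
    hS.s2 ⟨hφ, {Fm.ff}, Set.singleton_subset_iff.mpr hff, Set.finite_singleton _, .lf φ⟩

theorem not_seq_ff (hS : IsLogicalState (Fm.WF A) (Fm.Seq A) S) {φ ψ : Fm P}
    (hφ : φ ∈ S) (hψ : ψ ∈ S) : ¬ Fm.Seq A {φ, ψ} Fm.ff := fun h =>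
  hS.ff_not_mem <| hS.s2 ⟨.ff, {φ, ψ}, Set.insert_subset hφ (Set.singleton_subset_iff.mpr hψ),
    (Set.finite_singleton ψ).insert φ, h⟩

end IsLogicalState

theorem ne_setOf_wf_of_ff_not_mem (h : Fm.ff ∉ S) : S ≠ {φ | Fm.WF A φ} := by
  rintro rfl
  exact h .ff

def tautologies (A : Set (Set P)) : Set (Fm P) := {φ | Fm.WF A φ ∧ Fm.Seq A {Fm.tt} φ}

theorem isLogicalState_tautologies : IsLogicalState (Fm.WF A) (Fm.Seq A) (tautologies A) where
  nonempty := ⟨Fm.tt, .tt, .id _⟩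
  subset _ h := h.1
  proper := ne_setOf_wf_of_ff_not_mem fun h => Fm.Seq.not_tt_ff h.2
  s1 _ _ _ _ hsat hmem := (hsat.2.1 hmem).elim
  s2 := by
    rintro φ ⟨hW, Γ, hΓ, hfin, hseq⟩
    refine ⟨hW, ?_⟩
    simpa only [LawfulSingleton.insert_empty_eq] using
      Fm.Seq.insert_tt_of_union hfin (fun γ hγ => (hΓ hγ).2) (Δ := ∅) (by rwa [Set.union_empty])

theorem IsLogicalState.tautologies_subset (hS : IsLogicalState (Fm.WF A) (Fm.Seq A) S) :
    tautologies A ⊆ S := fun _ hφ =>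
  hS.s2 ⟨hφ.1, {Fm.tt}, Set.singleton_subset_iff.mpr hS.tt_mem, Set.finite_singleton _, hφ.2⟩

theorem isLogicalState_sInter (hS : IsLogicalState (Fm.WF A) (Fm.Seq A) S)
    {F : Set (Set (Fm P))} (hne : F.Nonempty)
    (hF : ∀ T ∈ F, IsLogicalState (Fm.WF A) (Fm.Seq A) T ∧ T ⊆ S) :
    IsLogicalState (Fm.WF A) (Fm.Seq A) (⋂₀ F) := by
  obtain ⟨T₀, hT₀⟩ := hne
  refine ⟨⟨Fm.tt, fun T hT => (hF T hT).1.tt_mem⟩,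
    fun φ hφ => (hF T₀ hT₀).1.subset (hφ T₀ hT₀),
    ne_setOf_wf_of_ff_not_mem fun hff => (hF T₀ hT₀).1.ff_not_mem (hff T₀ hT₀), ?_, ?_⟩
  · intro ι f hconj hdisj hsat hmem
    obtain ⟨i₀, hi₀⟩ := (hF T₀ hT₀).1.s1 ι f hconj hdisj hsat (hmem T₀ hT₀)
    refine ⟨i₀, fun T hT => ?_⟩
    obtain ⟨i, hi⟩ := (hF T hT).1.s1 ι f hconj hdisj hsat (hmem T hT)
    obtain rfl : i = i₀ := by
      by_contra hne
      exact hS.not_seq_ff ((hF T hT).2 hi) ((hF T₀ hT₀).2 hi₀) (hdisj i i₀ hne)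
    exact hi
  · rintro φ ⟨hW, Γ, hΓ, hfin, hseq⟩ T hT
    exact (hF T hT).1.s2 ⟨hW, Γ, hΓ.trans (Set.sInter_subset_of_mem hT), hfin, hseq⟩

theorem isLogicalState_sUnion {D : Set (Set (Fm P))} (hne : D.Nonempty)
    (hdir : DirectedOn (· ⊆ ·) D) (hD : ∀ T ∈ D, IsLogicalState (Fm.WF A) (Fm.Seq A) T) :
    IsLogicalState (Fm.WF A) (Fm.Seq A) (⋃₀ D) := by
  obtain ⟨T₀, hT₀⟩ := hne
  refine ⟨⟨Fm.tt, T₀, hT₀, (hD T₀ hT₀).tt_mem⟩, ?_, ?_, ?_, ?_⟩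
  · rintro φ ⟨T, hT, hφ⟩
    exact (hD T hT).subset hφ
  · exact ne_setOf_wf_of_ff_not_mem fun ⟨T, hT, hff⟩ => (hD T hT).ff_not_mem hff
  · rintro ι f hconj hdisj hsat ⟨T, hT, hmem⟩
    obtain ⟨i, hi⟩ := (hD T hT).s1 ι f hconj hdisj hsat hmem
    exact ⟨i, T, hT, hi⟩
  · rintro φ ⟨hW, Γ, hΓ, hfin, hseq⟩
    obtain ⟨T, hT, hΓT⟩ := hdir.exists_mem_subset_of_finite_of_subset_sUnion ⟨T₀, hT₀⟩ hfin hΓ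
    exact ⟨T, hT, (hD T hT).s2 ⟨hW, Γ, hΓT, hfin, hseq⟩⟩

end LogicalState

namespace LSt

variable {P : Type} {A : Set (Set P)}

def bot : LSt P A := ⟨tautologies A, isLogicalState_tautologies⟩

theorem bot_le (x : LSt P A) : bot ≤ x := x.2.tautologies_subset

theorem directedOn_image_val {D : Set (LSt P A)} (hdir : DirectedOn (· ≤ ·) D) :
    DirectedOn (· ⊆ ·) (Subtype.val '' D) :=
  directedOn_image.mpr hdir

def dSup (D : Set (LSt P A)) (hne : D.Nonempty) (hdir : DirectedOn (· ≤ ·) D) : LSt P A :=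
  ⟨⋃₀ (Subtype.val '' D), isLogicalState_sUnion (hne.image _)
    (directedOn_image_val hdir) (by rintro _ ⟨T, _, rfl⟩; exact T.2)⟩

theorem isLUB_dSup (D : Set (LSt P A)) (hne : D.Nonempty) (hdir : DirectedOn (· ≤ ·) D) :
    IsLUB D (dSup D hne hdir) :=
  ⟨fun T hT => Set.subset_sUnion_of_mem ⟨T, hT, rfl⟩,
    fun _ hu => Set.sUnion_subset (by rintro _ ⟨T, hT, rfl⟩; exact hu hT)⟩

theorem exists_mem_subset_of_isLUB {D : Set (LSt P A)} (hne : D.Nonempty)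
    (hdir : DirectedOn (· ≤ ·) D) {s : LSt P A} (hs : IsLUB D s) {X : Set (Fm P)}
    (hX : X.Finite) (hXs : X ⊆ s.val) : ∃ y ∈ D, X ⊆ y.val := by
  obtain rfl := hs.unique (isLUB_dSup D hne hdir)
  obtain ⟨_, ⟨y, hy, rfl⟩, hXy⟩ :=
    (directedOn_image_val hdir).exists_mem_subset_of_finite_of_subset_sUnion (hne.image _) hX hXs
  exact ⟨y, hy, hXy⟩

/-- The paper's `[X]_x`, bundled as a state. -/
def genIn (x : LSt P A) {X : Set (Fm P)} (hX : X ⊆ x.val) : LSt P A :=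
  ⟨clIn (Fm.WF A) (Fm.Seq A) X x.val, isLogicalState_sInter x.2 ⟨x.val, x.2, hX, le_rfl⟩
    fun _ hT => ⟨hT.1, hT.2.2⟩⟩

theorem isLeast_genIn (x : LSt P A) {X : Set (Fm P)} (hX : X ⊆ x.val) :
    IsLeast {y | X ⊆ y.val ∧ y ≤ x} (genIn x hX) :=
  ⟨⟨fun _ hφ _ hT => hT.2.1 hφ, Set.sInter_subset_of_mem ⟨x.2, hX, le_rfl⟩⟩,
    fun y hy => Set.sInter_subset_of_mem ⟨y.2, hy⟩⟩

theorem genIn_mono (x : LSt P A) {X Y : Set (Fm P)} (hXY : X ⊆ Y) (hX : X ⊆ x.val)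
    (hY : Y ⊆ x.val) : genIn x hX ≤ genIn x hY :=
  (isLeast_genIn x hX).2 ⟨hXY.trans (isLeast_genIn x hY).1.1, (isLeast_genIn x hY).1.2⟩

theorem genIn_eq_of_le {x y : LSt P A} {X : Set (Fm P)} (hX : X ⊆ x.val) (hXy : X ⊆ y.val)
    (hle : genIn x hX ≤ y) : genIn y hXy = genIn x hX := by
  have hx := (isLeast_genIn x hX).1
  have hy := (isLeast_genIn y hXy).1
  have hyx : genIn y hXy ≤ genIn x hX := (isLeast_genIn y hXy).2 ⟨hx.1, hle⟩
  exact le_antisymm hyx ((isLeast_genIn x hX).2 ⟨hy.1, hyx.trans hx.2⟩)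

theorem isCompactElt_genIn (x : LSt P A) {X : Set (Fm P)} (hXfin : X.Finite) (hX : X ⊆ x.val) :
    IsCompactElt (genIn x hX) := by
  intro D hne hdir s hs hle
  have hXs : X ⊆ s.val := (isLeast_genIn x hX).1.1.trans hle
  obtain ⟨y, hy, hXy⟩ := exists_mem_subset_of_isLUB hne hdir hs hXfin hXs
  refine ⟨y, hy, ?_⟩
  rw [← genIn_eq_of_le hX hXs hle]
  exact (isLeast_genIn s hXs).2 ⟨hXy, hs.1 hy⟩

theorem exists_isLUB_in_Iic (x : LSt P A) (T : Set (LSt P A)) (hT : T ⊆ Set.Iic x) :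
    ∃ s ∈ Set.Iic x, (∀ t ∈ T, t ≤ s) ∧ ∀ u ∈ Set.Iic x, (∀ t ∈ T, t ≤ u) → s ≤ u := by
  have hX : ⋃₀ (Subtype.val '' T) ⊆ x.val :=
    Set.sUnion_subset (by rintro _ ⟨t, ht, rfl⟩; exact hT ht)
  have hleast := isLeast_genIn x hX
  refine ⟨genIn x hX, hleast.1.2, fun t ht => ?_, fun u hux hu => hleast.2 ⟨?_, hux⟩⟩
  · exact (Set.subset_sUnion_of_mem (Set.mem_image_of_mem _ ht)).trans hleast.1.1
  · exact Set.sUnion_subset (by rintro _ ⟨t, ht, rfl⟩; exact hu t ht)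

def finGen (x : LSt P A) : Set (LSt P A) :=
  {k | ∃ (X : Set (Fm P)) (hX : X ⊆ x.val), X.Finite ∧ k = genIn x hX}

theorem finGen_nonempty (x : LSt P A) : (finGen x).Nonempty :=
  ⟨_, ∅, Set.empty_subset _, Set.finite_empty, rfl⟩

theorem directedOn_finGen (x : LSt P A) : DirectedOn (· ≤ ·) (finGen x) := by
  rintro _ ⟨X, hX, hXfin, rfl⟩ _ ⟨Y, hY, hYfin, rfl⟩
  exact ⟨_, ⟨X ∪ Y, Set.union_subset hX hY, hXfin.union hYfin, rfl⟩,
    genIn_mono x Set.subset_union_left _ _, genIn_mono x Set.subset_union_right _ _⟩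

theorem isCompactElt_of_mem_finGen {x k : LSt P A} (hk : k ∈ finGen x) : IsCompactElt k := by
  obtain ⟨X, hX, hXfin, rfl⟩ := hk
  exact isCompactElt_genIn x hXfin hX

theorem isLUB_finGen (x : LSt P A) : IsLUB (finGen x) x := by
  refine ⟨?_, fun u hu φ hφ => ?_⟩
  · rintro _ ⟨X, hX, -, rfl⟩
    exact (isLeast_genIn x hX).1.2
  · have hφx : {φ} ⊆ x.val := Set.singleton_subset_iff.mpr hφ
    exact hu ⟨{φ}, hφx, Set.finite_singleton φ, rfl⟩ ((isLeast_genIn x hφx).1.1 rfl)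

end LSt

/-- For any disjunctive sequent calculus `(L(P),⊢)`, the poset of
all logical states ordered by set inclusion is an algebraic L-domain. -/
theorem stmt9 (P : Type) (A : Set (Set P)) :
    IsAlgebraicLDomain (LSt P A) :=
  ⟨isAlgebraicDomain_of_compact_basis ⟨LSt.bot, LSt.bot_le⟩
    (fun D hne hdir => ⟨_, LSt.isLUB_dSup D hne hdir⟩)
    (fun x => ⟨LSt.finGen x, LSt.finGen_nonempty x, LSt.directedOn_finGen x,
      fun _ => LSt.isCompactElt_of_mem_finGen, LSt.isLUB_finGen x⟩),
    LSt.exists_isLUB_in_Iic⟩
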